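/- For every r ≥ 2 and all positive integers t₁ ≤ t₂, there exists a bipartite graph G with parts X and Y of sizes m = (r+1)t₁ and n = (r+1)t₂ respectively, with δ(X,Y) = (1 − 1/(r+1))n and δ(Y,X) = (1 − 1/(r+1))m, together with an r-coloring of its edges in which every monochromatic connected component has at most (m+n)/(r+1) vertices. -/

import Mathlib

/-!
Split each side into `r + 1` classes labelled by `ℤ/(r+1)` and join class `j` on the left to
class `k` on the right, with colour `j + k`, whenever `j + k ≠ r`. Every vertex misses exactly one
class of the other side, which gives the degrees. In colour `i`, class `j` is joined only to class
`i - j`, so a monochromatic component lies in the union of one class from each side: at most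
`t₁ + t₂` vertices.
-/

open SimpleGraph

/-- The subgraph of `G` consisting of the edges of color `i`. -/
def colorSub {V : Type*} {r : ℕ} (G : SimpleGraph V) (c : Sym2 V → Fin r) (i : Fin r) :
    SimpleGraph V where
  Adj u v := G.Adj u v ∧ c s(u, v) = i
  symm := by
    constructor
    intro u v h
    exact ⟨h.1.symm, by rw [Sym2.eq_swap]; exact h.2⟩
  loopless := by
    constructor
    intro u h
    exact G.irrefl h.1

/-- The degree of `v`, as the number of its neighbors. -/
noncomputable def nd {V : Type*} (G : SimpleGraph V) (v : V) : ℕ :=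
  (G.neighborSet v).ncard

theorem SimpleGraph.Reachable.apply_eq_of_forall_adj {V W : Type*} {G : SimpleGraph V}
    {f : V → W} (hf : ∀ u v, G.Adj u v → f u = f v) {u v : V} (h : G.Reachable u v) :
    f u = f v := by
  rw [reachable_iff_reflTransGen] at h
  simpa only [Relation.reflTransGen_eq_self] using Relation.ReflTransGen.lift f hf _ _ h

theorem SimpleGraph.ConnectedComponent.exists_supp_subset_preimage {V W : Type*}
    {G : SimpleGraph V} {f : V → W} (hf : ∀ u v, G.Adj u v → f u = f v)
    (C : G.ConnectedComponent) : ∃ w, C.supp ⊆ f ⁻¹' {w} := by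
  induction C using ConnectedComponent.ind with
  | h v => exact ⟨f v, fun u hu => (ConnectedComponent.exact hu).apply_eq_of_forall_adj hf⟩

theorem Fin.ncard_divNat_preimage_singleton (n t : ℕ) (k : Fin n) :
    (Fin.divNat ⁻¹' {k} : Set (Fin (n * t))).ncard = t := by
  have : (Fin.divNat ⁻¹' {k} : Set (Fin (n * t))) = finProdFinEquiv.symm ⁻¹' ({k} ×ˢ Set.univ) := by
    ext; simp
  rw [this, ← Equiv.image_symm_eq_preimage, Set.ncard_image_of_injective _ (Equiv.injective _),
    Set.ncard_prod]
  simp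

namespace CyclicBlowup

variable {α β : Type*} {r : ℕ} (p : α → Fin (r + 1)) (q : β → Fin (r + 1))

def cls : α ⊕ β → Fin (r + 1) := Sum.elim p q

@[simp] theorem cls_inl (a : α) : cls p q (.inl a) = p a := rfl

@[simp] theorem cls_inr (b : β) : cls p q (.inr b) = q b := rfl

/-- Classes `j` and `k` are joined iff `j + k ≠ r` in `ℤ/(r+1)`, and coloured `j + k`: the perfect
matchings `{j + k = s}` factorise `K_{r+1,r+1}`, and the one with `s = r` is deleted. -/
def graph : SimpleGraph (α ⊕ β) where
  Adj u v := (completeBipartiteGraph α β).Adj u v ∧ cls p q u + cls p q v ≠ Fin.last r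
  symm := ⟨fun _ _ h => ⟨h.1.symm, by simpa only [add_comm] using h.2⟩⟩
  loopless := ⟨fun _ h => (completeBipartiteGraph α β).irrefl h.1⟩

def coloring (hr : 0 < r) : Sym2 (α ⊕ β) → Fin r :=
  Sym2.lift ⟨fun u v => ⟨(cls p q u + cls p q v).val % r, Nat.mod_lt _ hr⟩,
    fun u v => by simp only [add_comm]⟩

theorem graph_le : graph p q ≤ completeBipartiteGraph α β := fun _ _ h => h.1

theorem neighborSet_inl (a : α) :
    (graph p q).neighborSet (.inl a) = .inr '' (q ⁻¹' {Fin.last r - p a})ᶜ := by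
  ext (a' | b)
  · simp [graph]
  · simp [graph, eq_sub_iff_add_eq, add_comm]

theorem neighborSet_inr (b : β) :
    (graph p q).neighborSet (.inr b) = .inl '' (p ⁻¹' {Fin.last r - q b})ᶜ := by
  ext (a | b')
  · simp [graph, eq_sub_iff_add_eq, add_comm]
  · simp [graph]

theorem cls_add_cls_of_adj {hr : 0 < r} {i : Fin r} {u v : α ⊕ β}
    (h : (colorSub (graph p q) (coloring p q hr) i).Adj u v) :
    cls p q u + cls p q v = i.castSucc := by
  obtain ⟨⟨-, hne⟩, hcol⟩ := h
  have hlt : (cls p q u + cls p q v).val < r := by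
    simpa using Fin.val_lt_last hne
  apply Fin.ext
  simpa [coloring, Nat.mod_eq_of_lt hlt] using congrArg Fin.val hcol

variable {p q} {t₁ t₂ : ℕ}

theorem ncard_neighborSet_inl [Finite β] (hq : ∀ k, (q ⁻¹' {k}).ncard = t₂) (a : α) :
    ((graph p q).neighborSet (.inl a)).ncard = Nat.card β - t₂ := by
  rw [neighborSet_inl, Set.ncard_image_of_injective _ Sum.inr_injective, Set.ncard_compl, hq]

theorem ncard_neighborSet_inr [Finite α] (hp : ∀ k, (p ⁻¹' {k}).ncard = t₁) (b : β) :
    ((graph p q).neighborSet (.inr b)).ncard = Nat.card α - t₁ := by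
  rw [neighborSet_inr, Set.ncard_image_of_injective _ Sum.inl_injective, Set.ncard_compl, hp]

variable (p q) in
/-- Along an edge of colour `i` we have `p a + q b = i`, so this is constant on the components of
colour `i`. -/
def potential (i : Fin r) : α ⊕ β → Fin (r + 1) := Sum.elim p (fun b => i.castSucc - q b)

theorem potential_eq_of_adj {hr : 0 < r} {i : Fin r} {u v : α ⊕ β}
    (h : (colorSub (graph p q) (coloring p q hr) i).Adj u v) :
    potential p q i u = potential p q i v := by
  have hsum := cls_add_cls_of_adj p q h
  rcases h with ⟨⟨hbip, -⟩, -⟩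
  rcases u with a | b <;> rcases v with a' | b' <;> simp at hbip
  · simp [potential, ← hsum]
  · simp [potential, ← hsum]

theorem ncard_supp_le [Finite α] [Finite β] (hp : ∀ k, (p ⁻¹' {k}).ncard = t₁)
    (hq : ∀ k, (q ⁻¹' {k}).ncard = t₂) (hr : 0 < r) (i : Fin r)
    (C : (colorSub (graph p q) (coloring p q hr) i).ConnectedComponent) :
    C.supp.ncard ≤ t₁ + t₂ := by
  obtain ⟨w, hw⟩ := C.exists_supp_subset_preimage fun _ _ => potential_eq_of_adj
  have hfibre : potential p q i ⁻¹' {w} =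
      .inl '' (p ⁻¹' {w}) ∪ .inr '' (q ⁻¹' {i.castSucc - w}) := by
    ext (a | b) <;> simp [potential, eq_sub_iff_add_eq, add_comm, eq_comm]
  calc C.supp.ncard ≤ (potential p q i ⁻¹' {w}).ncard := Set.ncard_le_ncard hw
    _ ≤ t₁ + t₂ := by
      rw [hfibre, ← hp w, ← hq (i.castSucc - w),
        ← Set.ncard_image_of_injective (p ⁻¹' _) Sum.inl_injective,
        ← Set.ncard_image_of_injective (q ⁻¹' _) Sum.inr_injective]
      exact Set.ncard_union_le _ _

end CyclicBlowup

theorem cast_add_one_mul_sub (r t : ℕ) :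
    (((r + 1) * t - t : ℕ) : ℝ) = (1 - 1 / ((r : ℝ) + 1)) * ((r + 1) * t) := by
  rw [Nat.add_one_mul, Nat.add_sub_cancel]
  push_cast
  field_simp
  ring

theorem stmt4_general (r t₁ t₂ : ℕ) (hr : 2 ≤ r) :
    ∃ (G : SimpleGraph (Fin ((r + 1) * t₁) ⊕ Fin ((r + 1) * t₂)))
      (c : Sym2 (Fin ((r + 1) * t₁) ⊕ Fin ((r + 1) * t₂)) → Fin r),
      G ≤ completeBipartiteGraph (Fin ((r + 1) * t₁)) (Fin ((r + 1) * t₂)) ∧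
      (∀ x, (nd G (Sum.inl x) : ℝ) = (1 - 1 / ((r : ℝ) + 1)) * ((r + 1) * t₂)) ∧
      (∀ y, (nd G (Sum.inr y) : ℝ) = (1 - 1 / ((r : ℝ) + 1)) * ((r + 1) * t₁)) ∧
      ∀ (i : Fin r) (C : (colorSub G c i).ConnectedComponent),
        (C.supp.ncard : ℝ) ≤ (((r : ℝ) + 1) * t₁ + ((r : ℝ) + 1) * t₂) / ((r : ℝ) + 1) := by
  have hr₀ : 0 < r := by omega
  have hp := Fin.ncard_divNat_preimage_singleton (r + 1) t₁
  have hq := Fin.ncard_divNat_preimage_singleton (r + 1) t₂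
  open CyclicBlowup in
  exact ⟨graph Fin.divNat Fin.divNat, coloring Fin.divNat Fin.divNat hr₀, graph_le _ _,
    fun x => by rw [nd, ncard_neighborSet_inl hq, Nat.card_fin, cast_add_one_mul_sub],
    fun y => by rw [nd, ncard_neighborSet_inr hp, Nat.card_fin, cast_add_one_mul_sub],
    fun i C => by
      rw [← mul_add, mul_div_cancel_left₀ _ (by positivity)]
      exact_mod_cast ncard_supp_le hp hq hr₀ i C⟩

theorem stmt4 (r t₁ t₂ : ℕ) (hr : 2 ≤ r) (ht₁ : 1 ≤ t₁) (ht : t₁ ≤ t₂) :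
    ∃ (G : SimpleGraph (Fin ((r + 1) * t₁) ⊕ Fin ((r + 1) * t₂)))
      (c : Sym2 (Fin ((r + 1) * t₁) ⊕ Fin ((r + 1) * t₂)) → Fin r),
      G ≤ completeBipartiteGraph (Fin ((r + 1) * t₁)) (Fin ((r + 1) * t₂)) ∧
      (∀ x, (nd G (Sum.inl x) : ℝ) = (1 - 1 / ((r : ℝ) + 1)) * ((r + 1) * t₂)) ∧
      (∀ y, (nd G (Sum.inr y) : ℝ) = (1 - 1 / ((r : ℝ) + 1)) * ((r + 1) * t₁)) ∧
      ∀ (i : Fin r) (C : (colorSub G c i).ConnectedComponent),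
        (C.supp.ncard : ℝ) ≤ (((r : ℝ) + 1) * t₁ + ((r : ℝ) + 1) * t₂) / ((r : ℝ) + 1) :=
  stmt4_general r t₁ t₂ hr
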